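/- arXiv:2504.14815 — 4 statements merged into one kernel-verified Lean document; each statement's English description precedes it below -/
import Mathlib

section
/- Let s ∈ ℝ^m be a probability vector, i.e. s_j ≥ 0 for all j and Σ_{j=1}^m s_j = 1. Then the operator norm of the matrix diag(s) − s sᵀ, with respect to the Euclidean norm on ℝ^m, is at most 1 − Σ_{j=1}^m s_j²; in particular it is at most 1. -/
open scoped BigOperators
open Matrix

/-- The operator norm of a square real matrix, with respect to the Euclidean norm. -/
noncomputable def matOpNorm {a b : ℕ} (M : Matrix (Fin a) (Fin b) ℝ) : ℝ :=
  ‖LinearMap.toContinuousLinearMap (Matrix.toEuclideanLin M)‖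

/-- For a probability vector `s`, the operator norm (w.r.t. the Euclidean norm) of
`diag(s) - s sᵀ` is at most `1 - ∑ j, s_j²`, and in particular at most `1`. -/
theorem opNorm_diag_sub_outer {m : ℕ} (s : Fin m → ℝ)
    (hs : ∀ j, 0 ≤ s j) (hsum : ∑ j, s j = 1) :
    matOpNorm (Matrix.diagonal s - Matrix.vecMulVec s s) ≤ 1 - ∑ j, s j ^ 2 ∧
    matOpNorm (Matrix.diagonal s - Matrix.vecMulVec s s) ≤ 1 := by
  set M : Matrix (Fin m) (Fin m) ℝ := Matrix.diagonal s - Matrix.vecMulVec s s with hM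
  have hs1 : ∀ j, s j ≤ 1 := by
    intro j
    have h := Finset.single_le_sum (fun i _ => hs i) (Finset.mem_univ j)
    rwa [hsum] at h
  have hsq : ∑ j, s j ^ 2 ≤ 1 := by
    have h : ∑ j, s j ^ 2 ≤ ∑ j, s j :=
      Finset.sum_le_sum fun j _ => by nlinarith [hs j, hs1 j]
    rwa [hsum] at h
  have hsq0 : 0 ≤ ∑ j, s j ^ 2 := Finset.sum_nonneg fun j _ => sq_nonneg _
  set C : ℝ := 1 - ∑ j, s j ^ 2 with hC
  have hC0 : 0 ≤ C := by simp [hC]; linarith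
  have hpair : ∀ j k : Fin m, j ≠ k → s j + s k ≤ 1 := by
    intro j k hjk
    have h := Finset.sum_le_sum_of_subset_of_nonneg (Finset.subset_univ {j, k})
      (fun i _ _ => hs i)
    rwa [Finset.sum_pair hjk, hsum] at h
  -- diagonal entries of M
  have hdiag : ∀ j, M j j = s j - s j ^ 2 := by
    intro j
    simp [hM, Matrix.vecMulVec_apply, sq]
  have htr : ∑ j, M j j = C := by
    simp only [hdiag, hC, Finset.sum_sub_distrib, hsum]
  -- Frobenius bound: ∑ (M j k)^2 ≤ C^2
  have hF : ∑ j, ∑ k, (M j k) ^ 2 ≤ C ^ 2 := by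
    have hCsq : C ^ 2 = ∑ j, ∑ k, M j j * M k k := by
      rw [← htr, sq, Finset.sum_mul_sum]
    rw [hCsq]
    refine Finset.sum_le_sum fun j _ => Finset.sum_le_sum fun k _ => ?_
    by_cases hjk : j = k
    · subst hjk; rw [sq]
    · have h1 : s j + s k ≤ 1 := hpair j k hjk
      have hMjk : M j k = -(s j * s k) := by
        simp [hM, Matrix.diagonal_apply_ne _ hjk, Matrix.vecMulVec_apply]
      rw [hMjk, hdiag, hdiag]
      nlinarith [hs j, hs k, mul_nonneg (hs j) (hs k)]
  -- pointwise bound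
  have key : ∀ x : EuclideanSpace ℝ (Fin m),
      ‖(Matrix.toEuclideanLin M) x‖ ≤ C * ‖x‖ := by
    intro x
    rw [EuclideanSpace.norm_eq, EuclideanSpace.norm_eq]
    have hco : ∀ i, ‖(Matrix.toEuclideanLin M) x i‖ ^ 2 = (∑ k, M i k * x k) ^ 2 := by
      intro i
      rw [Real.norm_eq_abs, sq_abs]
      simp [Matrix.toEuclideanLin_apply, Matrix.mulVec, dotProduct,
        WithLp.ofLp_toLp]
    have hx : ∀ i, ‖x i‖ ^ 2 = (x i) ^ 2 := fun i => by rw [Real.norm_eq_abs, sq_abs]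
    simp only [hco, hx]
    have h1 : ∑ i, (∑ k, M i k * x k) ^ 2 ≤ C ^ 2 * ∑ i, (x i) ^ 2 := by
      calc ∑ i, (∑ k, M i k * x k) ^ 2
          ≤ ∑ i, (∑ k, (M i k) ^ 2) * (∑ k, (x k) ^ 2) :=
            Finset.sum_le_sum fun i _ => Finset.sum_mul_sq_le_sq_mul_sq _ _ _
        _ = (∑ i, ∑ k, (M i k) ^ 2) * (∑ k, (x k) ^ 2) := (Finset.sum_mul _ _ _).symm
        _ ≤ C ^ 2 * ∑ k, (x k) ^ 2 :=
            mul_le_mul_of_nonneg_right hF (Finset.sum_nonneg fun k _ => sq_nonneg _)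
    calc Real.sqrt (∑ i, (∑ k, M i k * x k) ^ 2)
        ≤ Real.sqrt (C ^ 2 * ∑ i, (x i) ^ 2) := Real.sqrt_le_sqrt h1
      _ = C * Real.sqrt (∑ i, (x i) ^ 2) := by
          rw [Real.sqrt_mul (sq_nonneg C), Real.sqrt_sq hC0]
  have hop : matOpNorm M ≤ C := by
    unfold matOpNorm
    refine ContinuousLinearMap.opNorm_le_bound _ hC0 ?_
    intro x
    simpa using key x
  exact ⟨hop, le_trans hop (by linarith)⟩
end

section
/- For every m ≥ 1, the softmax map σ : ℝ^m → ℝ^m is 1-Lipschitz with respect to the Euclidean norm: ‖σ(a) − σ(b)‖₂ ≤ ‖a − b‖₂ for all a, b ∈ ℝ^m. -/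
open scoped BigOperators

open ContinuousLinearMap

/-- The candidate derivative of softmax at `x`, componentwise. -/
noncomputable def smD {m : ℕ} (x : Fin m → ℝ) (j : Fin m) : (Fin m → ℝ) →L[ℝ] ℝ :=
  (Real.exp (x j) / ∑ k, Real.exp (x k)) •
    (ContinuousLinearMap.proj j -
      ∑ k, (Real.exp (x k) / ∑ i, Real.exp (x i)) • (ContinuousLinearMap.proj k :
        (Fin m → ℝ) →L[ℝ] ℝ))

lemma smD_apply {m : ℕ} (x v : Fin m → ℝ) (j : Fin m) :
    smD x j v = (Real.exp (x j) / ∑ k, Real.exp (x k)) *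
      (v j - ∑ k, (Real.exp (x k) / ∑ i, Real.exp (x i)) * v k) := by
  simp [smD, ContinuousLinearMap.sum_apply]

lemma hasFDerivAt_sm {m : ℕ} (hm : 1 ≤ m) (x : Fin m → ℝ) :
    HasFDerivAt (fun y : Fin m → ℝ => fun j => Real.exp (y j) / ∑ k, Real.exp (y k))
      (ContinuousLinearMap.pi (smD x)) x := by
  have hS : 0 < ∑ k, Real.exp (x k) := by
    apply Finset.sum_pos (fun k _ => Real.exp_pos _)
    simpa [Finset.univ_nonempty_iff, Fin.pos_iff_nonempty] using
      Nat.lt_of_lt_of_le Nat.zero_lt_one hm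
  apply hasFDerivAt_pi.2
  intro j
  have hnum : HasFDerivAt (fun y : Fin m → ℝ => Real.exp (y j))
      (Real.exp (x j) • ContinuousLinearMap.proj j) x := (hasFDerivAt_apply j x).exp
  have hden : HasFDerivAt (fun y : Fin m → ℝ => ∑ k, Real.exp (y k))
      (∑ k, Real.exp (x k) • (ContinuousLinearMap.proj k : (Fin m → ℝ) →L[ℝ] ℝ)) x :=
    HasFDerivAt.fun_sum fun k _ => (hasFDerivAt_apply k x).exp
  have hinv : HasFDerivAt (fun y : Fin m → ℝ => (∑ k, Real.exp (y k))⁻¹)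
      ((-((∑ k, Real.exp (x k)) ^ 2)⁻¹) •
        (∑ k, Real.exp (x k) • (ContinuousLinearMap.proj k : (Fin m → ℝ) →L[ℝ] ℝ))) x :=
    (hasDerivAt_inv hS.ne').comp_hasFDerivAt x hden
  have h := hnum.mul hinv
  have heq : (fun y : Fin m → ℝ => Real.exp (y j) / ∑ k, Real.exp (y k)) =
      fun y : Fin m → ℝ => Real.exp (y j) * (∑ k, Real.exp (y k))⁻¹ := by
    funext y; rw [div_eq_mul_inv]
  rw [heq]
  refine h.congr_fderiv ?_
  ext v
  simp [smD, ContinuousLinearMap.sum_apply, Finset.mul_sum, Finset.sum_sub_distrib]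
  rw [mul_sub, Finset.mul_sum, neg_add_eq_sub]
  congr 1
  · field_simp
  refine Finset.sum_congr rfl fun k _ => ?_
  field_simp

/-- Key algebraic inequality: the softmax Jacobian contracts the `ℓ²` sum of squares. -/
lemma key_ineq {m : ℕ} (p v : Fin m → ℝ) (hp0 : ∀ j, 0 ≤ p j) (hp1 : ∀ j, p j ≤ 1)
    (hps : ∑ j, p j = 1) :
    ∑ j, (p j * (v j - ∑ k, p k * v k)) ^ 2 ≤ ∑ j, (v j) ^ 2 := by
  set s := ∑ k, p k * v k with hs
  calc ∑ j, (p j * (v j - s)) ^ 2 ≤ ∑ j, p j * (v j - s) ^ 2 := by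
        refine Finset.sum_le_sum fun j _ => ?_
        rw [mul_pow]
        have h1 : p j ^ 2 ≤ p j := by nlinarith [hp0 j, hp1 j]
        exact mul_le_mul_of_nonneg_right h1 (sq_nonneg _)
    _ = ∑ j, (p j * (v j) ^ 2 - 2 * s * (p j * v j) + s ^ 2 * p j) := by
        refine Finset.sum_congr rfl fun j _ => ?_; ring
    _ = (∑ j, p j * (v j) ^ 2) - 2 * s * s + s ^ 2 * 1 := by
        rw [Finset.sum_add_distrib, Finset.sum_sub_distrib, ← Finset.mul_sum, ← Finset.mul_sum,
          ← hs, hps]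
    _ = (∑ j, p j * (v j) ^ 2) - s ^ 2 := by ring
    _ ≤ ∑ j, p j * (v j) ^ 2 := by nlinarith [sq_nonneg s]
    _ ≤ ∑ j, (v j) ^ 2 := by
        refine Finset.sum_le_sum fun j _ => ?_
        nlinarith [hp0 j, hp1 j, sq_nonneg (v j)]

/-- The softmax map on `ℝ^m` (with the Euclidean norm). -/
noncomputable def softmax {m : ℕ} (a : EuclideanSpace ℝ (Fin m)) :
    EuclideanSpace ℝ (Fin m) :=
  WithLp.toLp 2 (fun j => Real.exp (a j) / ∑ k, Real.exp (a k))

/-- For every `m ≥ 1`, softmax is 1-Lipschitz with respect to the Euclidean norm. -/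
theorem softmax_lipschitz {m : ℕ} (hm : 1 ≤ m) (a b : EuclideanSpace ℝ (Fin m)) :
    ‖softmax a - softmax b‖ ≤ ‖a - b‖ := by
  set e := PiLp.continuousLinearEquiv 2 ℝ (fun _ : Fin m => ℝ) with he
  set D : EuclideanSpace ℝ (Fin m) → EuclideanSpace ℝ (Fin m) →L[ℝ] EuclideanSpace ℝ (Fin m) :=
    fun x => (e.symm.toContinuousLinearMap.comp (ContinuousLinearMap.pi (smD (e x)))).comp
      e.toContinuousLinearMap with hD
  have hderiv : ∀ x : EuclideanSpace ℝ (Fin m), HasFDerivAt softmax (D x) x := by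
    intro x
    have h1 : HasFDerivAt (fun y : EuclideanSpace ℝ (Fin m) =>
        (fun j => Real.exp ((e y) j) / ∑ k, Real.exp ((e y) k) : Fin m → ℝ))
        ((ContinuousLinearMap.pi (smD (e x))).comp e.toContinuousLinearMap) x :=
      (hasFDerivAt_sm hm (e x)).comp x e.toContinuousLinearMap.hasFDerivAt
    exact e.symm.toContinuousLinearMap.hasFDerivAt.comp x h1
  have hS : ∀ x : EuclideanSpace ℝ (Fin m), 0 < ∑ k, Real.exp (x k) := by
    intro x
    apply Finset.sum_pos (fun k _ => Real.exp_pos _)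
    simpa [Finset.univ_nonempty_iff, Fin.pos_iff_nonempty] using
      Nat.lt_of_lt_of_le Nat.zero_lt_one hm
  have hbound : ∀ x : EuclideanSpace ℝ (Fin m), ‖D x‖ ≤ 1 := by
    intro x
    refine ContinuousLinearMap.opNorm_le_bound _ zero_le_one fun v => ?_
    rw [one_mul]
    set p : Fin m → ℝ := fun j => Real.exp (x j) / ∑ k, Real.exp (x k) with hp
    have hDv : ∀ j, (D x v) j = p j * (v j - ∑ k, p k * v k) := by
      intro j
      show smD (e x) j (e v) = _
      rw [smD_apply]
      rfl
    have hp0 : ∀ j, 0 ≤ p j := fun j => div_nonneg (Real.exp_pos _).le (hS x).le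
    have hp1 : ∀ j, p j ≤ 1 := by
      intro j
      rw [hp, div_le_one (hS x)]
      exact Finset.single_le_sum (f := fun k => Real.exp (x k))
        (fun k _ => (Real.exp_pos _).le) (Finset.mem_univ j)
    have hps : ∑ j, p j = 1 := by
      rw [hp, ← Finset.sum_div, div_self (hS x).ne']
    rw [EuclideanSpace.norm_eq, EuclideanSpace.norm_eq]
    apply Real.sqrt_le_sqrt
    calc ∑ j, ‖(D x v) j‖ ^ 2 = ∑ j, (p j * (v j - ∑ k, p k * v k)) ^ 2 := by
          refine Finset.sum_congr rfl fun j _ => ?_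
          rw [hDv j, Real.norm_eq_abs, sq_abs]
      _ ≤ ∑ j, (v j) ^ 2 := key_ineq p v hp0 hp1 hps
      _ = ∑ j, ‖v j‖ ^ 2 := by
          refine Finset.sum_congr rfl fun j _ => ?_
          rw [Real.norm_eq_abs, sq_abs]
  have := Convex.norm_image_sub_le_of_norm_hasFDerivWithin_le
    (f := softmax) (f' := D) (s := Set.univ) (C := 1)
    (fun x _ => (hderiv x).hasFDerivWithinAt) (fun x _ => hbound x)
    convex_univ (Set.mem_univ b) (Set.mem_univ a)
  simpa using this
end

section
/- Fix an index i. The map p ↦ S(p)_i (the i-th row of the cross-attention map) from ℝ^{m×d_t} equipped with the Frobenius norm to ℝ^m equipped with the Euclidean norm is Lipschitz with constant ‖X_i W_Q‖₂ · ‖W_K‖_op / √d, where X_i denotes the i-th row of X. -/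
open scoped BigOperators
open Matrix

/-- Euclidean norm of a vector in `ℝ^k`. -/
noncomputable def euclNorm {k : ℕ} (v : Fin k → ℝ) : ℝ := Real.sqrt (∑ j, v j ^ 2)

/-- Frobenius norm of a real matrix. -/
noncomputable def frobNorm {a b : ℕ} (M : Matrix (Fin a) (Fin b) ℝ) : ℝ :=
  Real.sqrt (∑ i, ∑ j, M i j ^ 2)

/-- Softmax of a vector in `ℝ^k`. -/
noncomputable def softmaxV {k : ℕ} (v : Fin k → ℝ) : Fin k → ℝ :=
  fun j => Real.exp (v j) / ∑ l, Real.exp (v l)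

/-- The cross-attention map `S(p)`: the `i`-th row is the softmax of the `i`-th row of
`A(p) = (X W_Q)(p W_K)ᵀ / √d`. -/
noncomputable def attnS {n m d dx dt : ℕ} (X : Matrix (Fin n) (Fin dx) ℝ)
    (WQ : Matrix (Fin dx) (Fin d) ℝ) (WK : Matrix (Fin dt) (Fin d) ℝ)
    (p : Matrix (Fin m) (Fin dt) ℝ) : Matrix (Fin n) (Fin m) ℝ :=
  Matrix.of fun i => softmaxV fun j => ((X * WQ) * (p * WK)ᵀ) i j / Real.sqrt d

/-! ### Auxiliary lemmas -/

/-- The Jacobian of the softmax, as a continuous linear map on `Fin k → ℝ`. -/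
noncomputable def softJ {k : ℕ} (s : Fin k → ℝ) : (Fin k → ℝ) →L[ℝ] (Fin k → ℝ) :=
  ContinuousLinearMap.pi fun j =>
    s j • (ContinuousLinearMap.proj j - ∑ l, s l • ContinuousLinearMap.proj l)

lemma softJ_apply {k : ℕ} (s : Fin k → ℝ) (v : Fin k → ℝ) (j : Fin k) :
    softJ s v j = s j * (v j - ∑ l, s l * v l) := by
  simp [softJ, ContinuousLinearMap.pi_apply, ContinuousLinearMap.sum_apply, smul_eq_mul,
    mul_comm]

lemma hasFDerivAt_softmax {k : ℕ} (hk : 0 < k) (x : Fin k → ℝ) :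
    HasFDerivAt softmaxV (softJ (softmaxV x)) x := by
  have hD0 : (∑ l, Real.exp (x l)) ≠ 0 := by
    have : 0 < ∑ l, Real.exp (x l) :=
      Finset.sum_pos (fun l _ => Real.exp_pos _) ⟨⟨0, hk⟩, Finset.mem_univ _⟩
    exact ne_of_gt this
  have hD : HasFDerivAt (fun y : Fin k → ℝ => ∑ l, Real.exp (y l))
      (∑ l, Real.exp (x l) • ContinuousLinearMap.proj l) x :=
    HasFDerivAt.fun_sum fun l _ => (hasFDerivAt_apply l x).exp
  apply hasFDerivAt_pi.2
  intro j
  have hN : HasFDerivAt (fun y : Fin k → ℝ => Real.exp (y j))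
      (Real.exp (x j) • ContinuousLinearMap.proj j) x := (hasFDerivAt_apply j x).exp
  have hInv : HasFDerivAt (fun y : Fin k → ℝ => (∑ l, Real.exp (y l))⁻¹)
      ((-((∑ l, Real.exp (x l)) ^ 2)⁻¹) • (∑ l, Real.exp (x l) • ContinuousLinearMap.proj l)) x :=
    (hasDerivAt_inv hD0).comp_hasFDerivAt x hD
  have hmul := hN.mul hInv
  have : (fun y : Fin k → ℝ => softmaxV y j)
      = fun y : Fin k → ℝ => Real.exp (y j) * (∑ l, Real.exp (y l))⁻¹ := by
    funext y; simp [softmaxV, div_eq_mul_inv]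
  rw [show (fun y : Fin k → ℝ => softmaxV y j)
      = fun y : Fin k → ℝ => Real.exp (y j) * (∑ l, Real.exp (y l))⁻¹ from this]
  convert hmul using 1
  · rfl
  · rfl
  ext v
  simp only [ContinuousLinearMap.add_apply, ContinuousLinearMap.smul_apply,
    ContinuousLinearMap.sub_apply, ContinuousLinearMap.sum_apply, ContinuousLinearMap.proj_apply,
    smul_eq_mul, softmaxV, Finset.mul_sum, Finset.sum_mul]
  have h1 : ∑ l, (Real.exp (x l) / ∑ t, Real.exp (x t)) * v l
      = (∑ l, Real.exp (x l) * v l) / ∑ t, Real.exp (x t) := by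
    rw [Finset.sum_div]; exact Finset.sum_congr rfl fun l _ => by ring
  have h2 : ∑ l, Real.exp (x j) * (-((∑ t, Real.exp (x t)) ^ 2)⁻¹ * (Real.exp (x l) * v l))
      = Real.exp (x j) * (-((∑ t, Real.exp (x t)) ^ 2)⁻¹) * ∑ l, Real.exp (x l) * v l := by
    rw [Finset.mul_sum]; exact Finset.sum_congr rfl fun l _ => by ring
  rw [h1, h2]
  field_simp
  ring

lemma euclNorm_eq_norm {k : ℕ} (x : EuclideanSpace ℝ (Fin k)) :
    ‖x‖ = euclNorm (fun j => x j) := by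
  rw [EuclideanSpace.norm_eq, euclNorm]
  congr 1
  exact Finset.sum_congr rfl fun j _ => by rw [Real.norm_eq_abs, sq_abs]

lemma softmax_nonneg {k : ℕ} (x : Fin k → ℝ) (j : Fin k) : 0 ≤ softmaxV x j := by
  unfold softmaxV
  positivity

lemma softmax_sum_eq {k : ℕ} (hk : 0 < k) (x : Fin k → ℝ) : ∑ j, softmaxV x j = 1 := by
  have hD : 0 < ∑ l, Real.exp (x l) :=
    Finset.sum_pos (fun l _ => Real.exp_pos _) ⟨⟨0, hk⟩, Finset.mem_univ _⟩
  unfold softmaxV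
  rw [← Finset.sum_div, div_self hD.ne']

lemma softJ_quad {k : ℕ} (s v : Fin k → ℝ) (h0 : ∀ j, 0 ≤ s j) (h1 : ∑ j, s j = 1) :
    ∑ j, (s j * (v j - ∑ l, s l * v l)) ^ 2 ≤ ∑ j, v j ^ 2 := by
  set c : ℝ := ∑ l, s l * v l with hc
  have hle1 : ∀ j, s j ≤ 1 := fun j =>
    h1 ▸ Finset.single_le_sum (fun l _ => h0 l) (Finset.mem_univ j)
  have step1 : ∑ j, (s j * (v j - c)) ^ 2 ≤ ∑ j, s j * (v j - c) ^ 2 :=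
    Finset.sum_le_sum fun j _ => by
      have hs2 : s j ^ 2 ≤ s j := by nlinarith [h0 j, hle1 j]
      calc (s j * (v j - c)) ^ 2 = s j ^ 2 * (v j - c) ^ 2 := by ring
        _ ≤ s j * (v j - c) ^ 2 := mul_le_mul_of_nonneg_right hs2 (sq_nonneg _)
  have step2 : ∑ j, s j * (v j - c) ^ 2 = (∑ j, s j * v j ^ 2) - c ^ 2 := by
    have : ∀ j ∈ Finset.univ, s j * (v j - c) ^ 2
        = s j * v j ^ 2 - 2 * c * (s j * v j) + c ^ 2 * s j := fun j _ => by ring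
    rw [Finset.sum_congr rfl this, Finset.sum_add_distrib, Finset.sum_sub_distrib,
      ← Finset.mul_sum, ← Finset.mul_sum, ← hc, h1]
    ring
  have step3 : ∑ j, s j * v j ^ 2 ≤ ∑ j, v j ^ 2 :=
    Finset.sum_le_sum fun j _ => by nlinarith [h0 j, hle1 j, sq_nonneg (v j)]
  nlinarith [sq_nonneg c]

/-- The softmax Jacobian transported to `EuclideanSpace`. -/
noncomputable def softJE {k : ℕ} (s : Fin k → ℝ) :
    EuclideanSpace ℝ (Fin k) →L[ℝ] EuclideanSpace ℝ (Fin k) :=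
  (((EuclideanSpace.equiv (Fin k) ℝ).symm : (Fin k → ℝ) →L[ℝ] EuclideanSpace ℝ (Fin k))).comp
    ((softJ s).comp ((EuclideanSpace.equiv (Fin k) ℝ :
      EuclideanSpace ℝ (Fin k) ≃L[ℝ] (Fin k → ℝ)) : EuclideanSpace ℝ (Fin k) →L[ℝ] (Fin k → ℝ)))

lemma softJE_apply {k : ℕ} (s : Fin k → ℝ) (v : EuclideanSpace ℝ (Fin k)) (j : Fin k) :
    softJE s v j = s j * (v j - ∑ l, s l * v l) := by
  have : softJE s v j = softJ s (fun l => v l) j := rfl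
  rw [this, softJ_apply]

lemma softJE_norm_le {k : ℕ} (s : Fin k → ℝ) (h0 : ∀ j, 0 ≤ s j) (h1 : ∑ j, s j = 1) :
    ‖softJE s‖ ≤ 1 := by
  apply ContinuousLinearMap.opNorm_le_bound _ zero_le_one
  intro v
  rw [one_mul, euclNorm_eq_norm, euclNorm_eq_norm v, euclNorm, euclNorm]
  apply Real.sqrt_le_sqrt
  calc ∑ j, (softJE s v) j ^ 2 = ∑ j, (s j * (v j - ∑ l, s l * v l)) ^ 2 := by
        exact Finset.sum_congr rfl fun j _ => by rw [softJE_apply]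
    _ ≤ ∑ j, (v j) ^ 2 := softJ_quad s (fun l => v l) h0 h1

/-- The softmax as a self-map of `EuclideanSpace`. -/
noncomputable def softE {k : ℕ} (x : EuclideanSpace ℝ (Fin k)) : EuclideanSpace ℝ (Fin k) :=
  (EuclideanSpace.equiv (Fin k) ℝ).symm (softmaxV ((EuclideanSpace.equiv (Fin k) ℝ) x))

lemma hasFDerivAt_softE {k : ℕ} (hk : 0 < k) (x : EuclideanSpace ℝ (Fin k)) :
    HasFDerivAt softE (softJE (softmaxV fun l => x l)) x := by
  have h1 := hasFDerivAt_softmax hk (fun l => x l)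
  have h2 : HasFDerivAt (fun y : EuclideanSpace ℝ (Fin k) => (fun l => y l) :
      EuclideanSpace ℝ (Fin k) → (Fin k → ℝ))
      (((EuclideanSpace.equiv (Fin k) ℝ : EuclideanSpace ℝ (Fin k) ≃L[ℝ] (Fin k → ℝ))) :
        EuclideanSpace ℝ (Fin k) →L[ℝ] (Fin k → ℝ)) x :=
    ((EuclideanSpace.equiv (Fin k) ℝ : EuclideanSpace ℝ (Fin k) ≃L[ℝ] (Fin k → ℝ)) :
      EuclideanSpace ℝ (Fin k) →L[ℝ] (Fin k → ℝ)).hasFDerivAt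
  have h3 := h1.comp x h2
  have h4 := (((EuclideanSpace.equiv (Fin k) ℝ).symm :
    (Fin k → ℝ) →L[ℝ] EuclideanSpace ℝ (Fin k))).hasFDerivAt.comp x h3
  exact h4

lemma softmax_lip {k : ℕ} (hk : 0 < k) (a b : EuclideanSpace ℝ (Fin k)) :
    euclNorm (fun j => softmaxV (fun l => a l) j - softmaxV (fun l => b l) j) ≤ ‖a - b‖ := by
  have key := (convex_univ :
      Convex ℝ (Set.univ : Set (EuclideanSpace ℝ (Fin k)))).norm_image_sub_le_of_norm_hasFDerivWithin_le
    (f := softE) (f' := fun y => softJE (softmaxV fun l => y l))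
    (fun y _ => (hasFDerivAt_softE hk y).hasFDerivWithinAt)
    (fun y _ => softJE_norm_le _ (softmax_nonneg _) (softmax_sum_eq hk _))
    (Set.mem_univ b) (Set.mem_univ a)
  rw [one_mul] at key
  have : euclNorm (fun j => softmaxV (fun l => a l) j - softmaxV (fun l => b l) j)
      = ‖softE a - softE b‖ := by
    rw [euclNorm_eq_norm]
    congr 1
  calc _ = ‖softE a - softE b‖ := this
    _ ≤ ‖a - b‖ := key

lemma cs_sqrt {k : ℕ} (f g : Fin k → ℝ) :
    ∑ t, f t * g t ≤ Real.sqrt (∑ t, f t ^ 2) * Real.sqrt (∑ t, g t ^ 2) := by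
  calc ∑ t, f t * g t ≤ |∑ t, f t * g t| := le_abs_self _
    _ = Real.sqrt ((∑ t, f t * g t) ^ 2) := (Real.sqrt_sq_eq_abs _).symm
    _ ≤ Real.sqrt ((∑ t, f t ^ 2) * ∑ t, g t ^ 2) :=
        Real.sqrt_le_sqrt (Finset.sum_mul_sq_le_sq_mul_sq _ _ _)
    _ = _ := Real.sqrt_mul (Finset.sum_nonneg fun t _ => sq_nonneg _) _

lemma mulVec_norm_le {a b : ℕ} (M : Matrix (Fin a) (Fin b) ℝ) (w : Fin b → ℝ) :
    Real.sqrt (∑ t, (M.mulVec w t) ^ 2) ≤ matOpNorm M * Real.sqrt (∑ l, w l ^ 2) := by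
  have h := (LinearMap.toContinuousLinearMap (Matrix.toEuclideanLin M)).le_opNorm
    ((WithLp.equiv 2 (Fin b → ℝ)).symm w)
  rw [euclNorm_eq_norm, euclNorm_eq_norm] at h
  calc Real.sqrt (∑ t, (M.mulVec w t) ^ 2)
      = euclNorm (fun t => (LinearMap.toContinuousLinearMap (Matrix.toEuclideanLin M))
          ((WithLp.equiv 2 (Fin b → ℝ)).symm w) t) := rfl
    _ ≤ matOpNorm M * euclNorm (fun l =>
          ((WithLp.equiv 2 (Fin b → ℝ)).symm w : EuclideanSpace ℝ (Fin b)) l) := h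
    _ = matOpNorm M * Real.sqrt (∑ l, w l ^ 2) := rfl

lemma transpose_mulVec_norm_le {a b : ℕ} (M : Matrix (Fin a) (Fin b) ℝ) (x : Fin a → ℝ) :
    Real.sqrt (∑ l, (Mᵀ.mulVec x l) ^ 2) ≤ matOpNorm M * Real.sqrt (∑ t, x t ^ 2) := by
  set w : Fin b → ℝ := Mᵀ.mulVec x with hw
  have key1 : ∑ l, w l ^ 2 = ∑ t, x t * M.mulVec w t := by
    have : ∀ l ∈ Finset.univ, w l ^ 2 = ∑ t, M t l * x t * w l := fun l _ => by
      rw [hw]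
      simp only [Matrix.mulVec, dotProduct, Matrix.transpose_apply]
      rw [pow_two, Finset.sum_mul]
    rw [Finset.sum_congr rfl this, Finset.sum_comm]
    refine Finset.sum_congr rfl fun t _ => ?_
    simp only [Matrix.mulVec, dotProduct, Finset.mul_sum]
    exact Finset.sum_congr rfl fun l _ => by ring
  have key2 : ∑ t, x t * M.mulVec w t
      ≤ Real.sqrt (∑ t, x t ^ 2) * Real.sqrt (∑ t, (M.mulVec w t) ^ 2) := cs_sqrt _ _
  have key3 := mulVec_norm_le M w
  set α := Real.sqrt (∑ l, w l ^ 2) with hα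
  have hα2 : α ^ 2 = ∑ l, w l ^ 2 :=
    Real.sq_sqrt (Finset.sum_nonneg fun l _ => sq_nonneg _)
  have hαnn : 0 ≤ α := Real.sqrt_nonneg _
  have hchain : α ^ 2 ≤ Real.sqrt (∑ t, x t ^ 2) * (matOpNorm M * α) := by
    rw [hα2, key1]
    calc ∑ t, x t * M.mulVec w t
        ≤ Real.sqrt (∑ t, x t ^ 2) * Real.sqrt (∑ t, (M.mulVec w t) ^ 2) := key2
      _ ≤ Real.sqrt (∑ t, x t ^ 2) * (matOpNorm M * α) :=
          mul_le_mul_of_nonneg_left key3 (Real.sqrt_nonneg _)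
  rcases eq_or_lt_of_le hαnn with h0 | h0
  · rw [← h0]
    exact mul_nonneg (norm_nonneg _) (Real.sqrt_nonneg _)
  · nlinarith [Real.sqrt_nonneg (∑ t, x t ^ 2)]

/-- The map `p ↦ S(p)_i` (the `i`-th row of the cross-attention map), from `ℝ^{m×d_t}`
with the Frobenius norm to `ℝ^m` with the Euclidean norm, is Lipschitz with constant
`‖X_i W_Q‖₂ ⬝ ‖W_K‖_op / √d`. -/
theorem attnS_row_lipschitz {n m d dx dt : ℕ}
    (hn : 0 < n) (hm : 0 < m) (hd : 0 < d) (hdx : 0 < dx) (hdt : 0 < dt)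
    (X : Matrix (Fin n) (Fin dx) ℝ)
    (WQ : Matrix (Fin dx) (Fin d) ℝ) (WK : Matrix (Fin dt) (Fin d) ℝ)
    (i : Fin n) (p p' : Matrix (Fin m) (Fin dt) ℝ) :
    euclNorm (fun j => attnS X WQ WK p i j - attnS X WQ WK p' i j)
      ≤ euclNorm (fun l => (X * WQ) i l) * matOpNorm WK / Real.sqrt d
          * frobNorm (p - p') := by
  have hd' : (0:ℝ) < Real.sqrt d := Real.sqrt_pos.2 (by exact_mod_cast hd)
  set q : Fin d → ℝ := fun l => (X * WQ) i l with hq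
  set w : Matrix (Fin m) (Fin d) ℝ := (p - p') * WK with hw
  have hwpt : ∀ j l, w j l = (p * WK) j l - (p' * WK) j l := by
    intro j l
    rw [hw, Matrix.sub_mul, Matrix.sub_apply]
  set aE : EuclideanSpace ℝ (Fin m) := (WithLp.equiv 2 (Fin m → ℝ)).symm
    (fun j => ((X * WQ) * (p * WK)ᵀ) i j / Real.sqrt d) with haE
  set bE : EuclideanSpace ℝ (Fin m) := (WithLp.equiv 2 (Fin m → ℝ)).symm
    (fun j => ((X * WQ) * (p' * WK)ᵀ) i j / Real.sqrt d) with hbE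
  have hstep1 : euclNorm (fun j => attnS X WQ WK p i j - attnS X WQ WK p' i j)
      ≤ ‖aE - bE‖ := softmax_lip hm aE bE
  have hdiff : ∀ j : Fin m, aE j - bE j = (∑ l, q l * w j l) / Real.sqrt d := by
    intro j
    have h0 : aE j - bE j = ((X * WQ) * (p * WK)ᵀ) i j / Real.sqrt d
        - ((X * WQ) * (p' * WK)ᵀ) i j / Real.sqrt d := rfl
    rw [h0, div_sub_div_same]
    congr 1
    rw [Matrix.mul_apply, Matrix.mul_apply, ← Finset.sum_sub_distrib]
    refine Finset.sum_congr rfl fun l _ => ?_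
    rw [Matrix.transpose_apply, Matrix.transpose_apply, ← mul_sub, hwpt j l]
  have hnorm : ‖aE - bE‖ = Real.sqrt (∑ j, (∑ l, q l * w j l) ^ 2) / Real.sqrt d := by
    rw [euclNorm_eq_norm, euclNorm]
    have h1 : ∀ j ∈ Finset.univ, (aE - bE) j ^ 2 = (∑ l, q l * w j l) ^ 2 / (d : ℝ) := by
      intro j _
      have : (aE - bE) j = aE j - bE j := rfl
      rw [this, hdiff j, div_pow, Real.sq_sqrt (Nat.cast_nonneg d)]
    rw [Finset.sum_congr rfl h1, ← Finset.sum_div,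
      Real.sqrt_div (Finset.sum_nonneg fun j _ => sq_nonneg _)]
  have hCS : ∀ j : Fin m, (∑ l, q l * w j l) ^ 2 ≤ (∑ l, q l ^ 2) * ∑ l, w j l ^ 2 :=
    fun j => Finset.sum_mul_sq_le_sq_mul_sq _ _ _
  have hrow : ∀ j : Fin m, ∑ l, w j l ^ 2 ≤ matOpNorm WK ^ 2 * ∑ t, (p - p') j t ^ 2 := by
    intro j
    have hwj : ∀ l, w j l = WKᵀ.mulVec ((p - p') j) l := by
      intro l
      rw [hw, Matrix.mul_apply]
      simp only [Matrix.mulVec, dotProduct, Matrix.transpose_apply]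
      exact Finset.sum_congr rfl fun t _ => by ring
    have h := transpose_mulVec_norm_le WK ((p - p') j)
    calc ∑ l, w j l ^ 2
        = Real.sqrt (∑ l, (WKᵀ.mulVec ((p - p') j) l) ^ 2) ^ 2 := by
          rw [Real.sq_sqrt (Finset.sum_nonneg fun l _ => sq_nonneg _)]
          exact Finset.sum_congr rfl fun l _ => by rw [hwj l]
      _ ≤ (matOpNorm WK * Real.sqrt (∑ t, (p - p') j t ^ 2)) ^ 2 :=
          pow_le_pow_left₀ (Real.sqrt_nonneg _) h 2
      _ = matOpNorm WK ^ 2 * ∑ t, (p - p') j t ^ 2 := by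
          rw [mul_pow, Real.sq_sqrt (Finset.sum_nonneg fun t _ => sq_nonneg _)]
  have hq2 : (0:ℝ) ≤ ∑ l, q l ^ 2 := Finset.sum_nonneg fun l _ => sq_nonneg _
  have hsum : ∑ j, (∑ l, q l * w j l) ^ 2
      ≤ (∑ l, q l ^ 2) * (matOpNorm WK ^ 2 * ∑ j, ∑ t, (p - p') j t ^ 2) := by
    calc ∑ j, (∑ l, q l * w j l) ^ 2
        ≤ ∑ j, (∑ l, q l ^ 2) * ∑ l, w j l ^ 2 := Finset.sum_le_sum fun j _ => hCS j
      _ ≤ ∑ j, (∑ l, q l ^ 2) * (matOpNorm WK ^ 2 * ∑ t, (p - p') j t ^ 2) :=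
          Finset.sum_le_sum fun j _ => mul_le_mul_of_nonneg_left (hrow j) hq2
      _ = _ := by rw [← Finset.mul_sum, ← Finset.mul_sum]
  have hfinal : Real.sqrt (∑ j, (∑ l, q l * w j l) ^ 2)
      ≤ euclNorm q * (matOpNorm WK * frobNorm (p - p')) := by
    calc Real.sqrt (∑ j, (∑ l, q l * w j l) ^ 2)
        ≤ Real.sqrt ((∑ l, q l ^ 2) *
            (matOpNorm WK ^ 2 * ∑ j, ∑ t, (p - p') j t ^ 2)) := Real.sqrt_le_sqrt hsum
      _ = Real.sqrt (∑ l, q l ^ 2) * (Real.sqrt (matOpNorm WK ^ 2) *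
            Real.sqrt (∑ j, ∑ t, (p - p') j t ^ 2)) := by
          rw [Real.sqrt_mul hq2, Real.sqrt_mul (sq_nonneg _)]
      _ = euclNorm q * (matOpNorm WK * frobNorm (p - p')) := by
          have hC : (0:ℝ) ≤ matOpNorm WK := norm_nonneg _
          rw [Real.sqrt_sq hC]
          rfl
  calc euclNorm (fun j => attnS X WQ WK p i j - attnS X WQ WK p' i j)
      ≤ ‖aE - bE‖ := hstep1
    _ = Real.sqrt (∑ j, (∑ l, q l * w j l) ^ 2) / Real.sqrt d := hnorm
    _ ≤ (euclNorm q * (matOpNorm WK * frobNorm (p - p'))) / Real.sqrt d :=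
        (div_le_div_iff_of_pos_right hd').2 hfinal
    _ = euclNorm (fun l => (X * WQ) i l) * matOpNorm WK / Real.sqrt d * frobNorm (p - p') := by
        rw [hq]; ring
end

section
/- (Theorem 1 of the paper, row form.) Fix an index i and a radius p* ≥ 0. For all text-embedding matrices p, p' ∈ ℝ^{m×d_t} with ‖p‖_F ≤ p* and ‖p'‖_F ≤ p*, the i-th row of the cross-attention output satisfies ‖Y(p)_i − Y(p')_i‖₂ ≤ (C₁ p* + C₂) · ‖p − p'‖_F, where C₁ = ‖X_i W_Q‖₂ · ‖W_K‖_op · ‖W_V‖_op / √d and C₂ = ‖W_V‖_op, with X_i the i-th row of X; that is, p ↦ Y(p)_i is Lipschitz on the closed Frobenius-norm ball of radius p* with constant C₁ p* + C₂. -/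
open scoped BigOperators
open Matrix

/-- The cross-attention output `Y(p) = S(p) · (p W_V)`. -/
noncomputable def attnY {n m d dx dt dv : ℕ} (X : Matrix (Fin n) (Fin dx) ℝ)
    (WQ : Matrix (Fin dx) (Fin d) ℝ) (WK : Matrix (Fin dt) (Fin d) ℝ)
    (WV : Matrix (Fin dt) (Fin dv) ℝ)
    (p : Matrix (Fin m) (Fin dt) ℝ) : Matrix (Fin n) (Fin dv) ℝ :=
  attnS X WQ WK p * (p * WV)

-- basic facts
lemma euclNorm_nonneg {k : ℕ} (v : Fin k → ℝ) : 0 ≤ euclNorm v := Real.sqrt_nonneg _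
lemma frobNorm_nonneg {a b : ℕ} (M : Matrix (Fin a) (Fin b) ℝ) : 0 ≤ frobNorm M := Real.sqrt_nonneg _

lemma euclNorm_sq {k : ℕ} (v : Fin k → ℝ) : euclNorm v ^ 2 = ∑ j, v j ^ 2 :=
  Real.sq_sqrt (by positivity)

lemma frobNorm_sq {a b : ℕ} (M : Matrix (Fin a) (Fin b) ℝ) :
    frobNorm M ^ 2 = ∑ i, ∑ j, M i j ^ 2 := Real.sq_sqrt (by positivity)

lemma euclNorm_eq_norm_s7 {k : ℕ} (v : Fin k → ℝ) :
    euclNorm v = ‖(WithLp.equiv 2 (Fin k → ℝ)).symm v‖ := by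
  rw [EuclideanSpace.norm_eq]
  unfold euclNorm
  congr 1
  exact Finset.sum_congr rfl fun j _ => by simp [Real.norm_eq_abs, sq_abs]

lemma matOpNorm_transpose {A B : ℕ} (W : Matrix (Fin A) (Fin B) ℝ) :
    matOpNorm Wᵀ = matOpNorm W := by
  unfold matOpNorm
  have h : Wᵀ = Wᴴ := (Matrix.conjTranspose_eq_transpose_of_trivial W).symm
  rw [h, Matrix.toEuclideanLin_conjTranspose_eq_adjoint,
    LinearMap.adjoint_toContinuousLinearMap]
  exact (ContinuousLinearMap.adjoint : _ ≃ₗᵢ⋆[ℝ] _).norm_map _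

lemma frobNorm_transpose {A B : ℕ} (M : Matrix (Fin A) (Fin B) ℝ) :
    frobNorm Mᵀ = frobNorm M := by
  unfold frobNorm
  rw [Finset.sum_comm]
  rfl

/-- Cauchy–Schwarz style bound. -/
lemma euclNorm_sum_mul_le {A B : ℕ} (u : Fin B → ℝ) (M : Matrix (Fin A) (Fin B) ℝ) :
    euclNorm (fun a => ∑ b, u b * M a b) ≤ euclNorm u * frobNorm M := by
  unfold euclNorm frobNorm
  rw [← Real.sqrt_mul (by positivity)]
  apply Real.sqrt_le_sqrt
  rw [Finset.mul_sum]
  exact Finset.sum_le_sum fun a _ => Finset.sum_mul_sq_le_sq_mul_sq _ _ _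

lemma euclNorm_vecMul_le {A B : ℕ} (u : Fin A → ℝ) (W : Matrix (Fin A) (Fin B) ℝ) :
    euclNorm (fun b => ∑ t, u t * W t b) ≤ matOpNorm W * euclNorm u := by
  have key : (WithLp.equiv 2 (Fin B → ℝ)).symm (fun b => ∑ t, u t * W t b)
      = Matrix.toEuclideanLin Wᵀ ((WithLp.equiv 2 (Fin A → ℝ)).symm u) := by
    rw [WithLp.equiv_symm_apply, WithLp.equiv_symm_apply, Matrix.toEuclideanLin_apply_piLp_toLp]
    congr 1
    funext b
    simp [Matrix.mulVec, dotProduct, Matrix.transpose_apply, mul_comm]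
  rw [euclNorm_eq_norm_s7, euclNorm_eq_norm_s7, key, ← matOpNorm_transpose]
  exact (LinearMap.toContinuousLinearMap (Matrix.toEuclideanLin Wᵀ)).le_opNorm _

lemma frobNorm_mul_le {A B C : ℕ} (P : Matrix (Fin A) (Fin B) ℝ)
    (W : Matrix (Fin B) (Fin C) ℝ) :
    frobNorm (P * W) ≤ frobNorm P * matOpNorm W := by
  have hop : 0 ≤ matOpNorm W := norm_nonneg _
  have hrow : ∀ j, ∑ b, ((P * W) j b) ^ 2 ≤ matOpNorm W ^ 2 * ∑ t, P j t ^ 2 := by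
    intro j
    have h := euclNorm_vecMul_le (fun t => P j t) W
    have h2 : (fun b => ∑ t, P j t * W t b) = fun b => (P * W) j b := by
      funext b; rw [Matrix.mul_apply]
    rw [h2] at h
    have := pow_le_pow_left₀ (euclNorm_nonneg _) h 2
    rw [euclNorm_sq, mul_pow, euclNorm_sq] at this
    exact this
  unfold frobNorm
  rw [show matOpNorm W = Real.sqrt (matOpNorm W ^ 2) from (Real.sqrt_sq hop).symm,
    ← Real.sqrt_mul (by positivity)]
  apply Real.sqrt_le_sqrt
  calc ∑ j, ∑ b, ((P * W) j b) ^ 2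
      ≤ ∑ j, matOpNorm W ^ 2 * ∑ t, P j t ^ 2 := Finset.sum_le_sum fun j _ => hrow j
    _ = (∑ j, ∑ t, P j t ^ 2) * matOpNorm W ^ 2 := by rw [← Finset.mul_sum]; ring

lemma expSum_pos {k : ℕ} (hk : 0 < k) (v : Fin k → ℝ) : 0 < ∑ l, Real.exp (v l) := by
  haveI : NeZero k := ⟨hk.ne'⟩
  exact Finset.sum_pos (fun l _ => Real.exp_pos _) Finset.univ_nonempty

lemma softmaxV_nonneg {k : ℕ} (hk : 0 < k) (v : Fin k → ℝ) (j : Fin k) :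
    0 ≤ softmaxV v j :=
  div_nonneg (Real.exp_pos _).le (expSum_pos hk v).le

lemma softmaxV_sum_one {k : ℕ} (hk : 0 < k) (v : Fin k → ℝ) :
    ∑ j, softmaxV v j = 1 := by
  unfold softmaxV
  rw [← Finset.sum_div]
  exact div_self (expSum_pos hk v).ne'

lemma softmaxV_le_one {k : ℕ} (hk : 0 < k) (v : Fin k → ℝ) (j : Fin k) :
    softmaxV v j ≤ 1 := by
  rw [← softmaxV_sum_one hk v]
  exact Finset.single_le_sum (fun l _ => softmaxV_nonneg hk v l) (Finset.mem_univ j)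

/-- The Jacobian of softmax as a linear map. -/
noncomputable def smJlin {k : ℕ} (s : Fin k → ℝ) : (Fin k → ℝ) →ₗ[ℝ] (Fin k → ℝ) where
  toFun w := fun j => s j * (w j - ∑ l, s l * w l)
  map_add' w x := by
    funext j
    simp only [Pi.add_apply]
    rw [show ∑ l, s l * (w l + x l) = (∑ l, s l * w l) + ∑ l, s l * x l by
      rw [← Finset.sum_add_distrib]; exact Finset.sum_congr rfl fun l _ => by ring]
    ring
  map_smul' c w := by
    funext j
    simp only [Pi.smul_apply, smul_eq_mul, RingHom.id_apply]
    rw [show ∑ l, s l * (c * w l) = c * ∑ l, s l * w l by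
      rw [Finset.mul_sum]; exact Finset.sum_congr rfl fun l _ => by ring]
    ring

lemma softmax_hasFDerivAt_pi {k : ℕ} (hk : 0 < k) (x : Fin k → ℝ) :
    HasFDerivAt softmaxV
      (LinearMap.toContinuousLinearMap (smJlin (softmaxV x))) x := by
  rw [hasFDerivAt_pi']
  intro j
  have hS : (0:ℝ) < ∑ l, Real.exp (x l) := expSum_pos hk x
  have hnum : HasFDerivAt (𝕜 := ℝ) (fun v : Fin k → ℝ => Real.exp (v j))
      (Real.exp (x j) • ContinuousLinearMap.proj j) x :=
    HasDerivAt.comp_hasFDerivAt (𝕜 := ℝ) (f := fun v : Fin k → ℝ => v j) x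
      (Real.hasDerivAt_exp (x j)) (hasFDerivAt_apply j x)
  have hden : HasFDerivAt (𝕜 := ℝ) (fun v : Fin k → ℝ => ∑ l, Real.exp (v l))
      (∑ l, Real.exp (x l) • (ContinuousLinearMap.proj l :
        (Fin k → ℝ) →L[ℝ] ℝ)) x :=
    HasFDerivAt.fun_sum (fun l _ =>
      HasDerivAt.comp_hasFDerivAt (𝕜 := ℝ) (f := fun v : Fin k → ℝ => v l) x
        (Real.hasDerivAt_exp (x l)) (hasFDerivAt_apply l x))
  have hinv : HasFDerivAt (𝕜 := ℝ) (fun v : Fin k → ℝ => (∑ l, Real.exp (v l))⁻¹)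
      ((-((∑ l, Real.exp (x l)) ^ 2)⁻¹) • (∑ l, Real.exp (x l) •
        (ContinuousLinearMap.proj l : (Fin k → ℝ) →L[ℝ] ℝ))) x :=
    HasDerivAt.comp_hasFDerivAt (𝕜 := ℝ) (f := fun v : Fin k → ℝ => ∑ l, Real.exp (v l)) x
      (hasDerivAt_inv hS.ne') hden
  have hmul := hnum.fun_mul hinv
  have feq : (fun v : Fin k → ℝ => softmaxV v j)
      = fun v : Fin k → ℝ => Real.exp (v j) * (∑ l, Real.exp (v l))⁻¹ := by
    funext v; rw [softmaxV, div_eq_mul_inv]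
  rw [feq]
  refine hmul.congr_fderiv ?_
  symm
  apply ContinuousLinearMap.ext
  intro w
  simp only [ContinuousLinearMap.coe_comp', Function.comp_apply,
    LinearMap.coe_toContinuousLinearMap', ContinuousLinearMap.proj_apply,
    ContinuousLinearMap.add_apply, ContinuousLinearMap.coe_smul', Pi.smul_apply,
    ContinuousLinearMap.coe_sum', Finset.sum_apply, smul_eq_mul, smJlin,
    LinearMap.coe_mk, AddHom.coe_mk, softmaxV, neg_mul]
  rw [Finset.mul_sum]
  have h1 : ∑ l, (Real.exp (x l) / ∑ i, Real.exp (x i)) * w l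
      = (∑ l, Real.exp (x l) * w l) / (∑ i, Real.exp (x i)) := by
    rw [Finset.sum_div]; exact Finset.sum_congr rfl fun l _ => by ring
  have h2 : ∑ l, ((∑ i, Real.exp (x i)) ^ 2)⁻¹ * (Real.exp (x l) * w l)
      = (∑ l, Real.exp (x l) * w l) / (∑ i, Real.exp (x i)) ^ 2 := by
    rw [Finset.sum_div]; exact Finset.sum_congr rfl fun l _ => by ring
  rw [h1, h2]
  field_simp
  ring

lemma smJ_bound {k : ℕ} (s w : Fin k → ℝ) (hs0 : ∀ j, 0 ≤ s j) (hs1 : ∀ j, s j ≤ 1)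
    (hsum : ∑ j, s j = 1) :
    ∑ j, (s j * (w j - ∑ l, s l * w l)) ^ 2 ≤ ∑ j, w j ^ 2 := by
  set c := ∑ l, s l * w l with hc
  calc ∑ j, (s j * (w j - c)) ^ 2
      ≤ ∑ j, s j * (w j - c) ^ 2 := by
        apply Finset.sum_le_sum; intro j _
        rw [mul_pow]
        have h : s j ^ 2 ≤ s j := by nlinarith [hs0 j, hs1 j]
        exact mul_le_mul_of_nonneg_right h (sq_nonneg _)
    _ = (∑ j, s j * w j ^ 2) - c ^ 2 := by
        have expand : ∀ j : Fin k, s j * (w j - c) ^ 2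
            = s j * w j ^ 2 - 2 * c * (s j * w j) + c ^ 2 * s j := fun j => by ring
        simp_rw [expand]
        rw [Finset.sum_add_distrib, Finset.sum_sub_distrib, ← Finset.mul_sum, ← Finset.mul_sum,
          hsum, ← hc]
        ring
    _ ≤ ∑ j, s j * w j ^ 2 := by nlinarith [sq_nonneg c]
    _ ≤ ∑ j, w j ^ 2 := Finset.sum_le_sum fun j _ => by nlinarith [hs0 j, hs1 j, sq_nonneg (w j)]

noncomputable def smE {k : ℕ} : EuclideanSpace ℝ (Fin k) → EuclideanSpace ℝ (Fin k) :=
  fun v => (EuclideanSpace.equiv (Fin k) ℝ).symm (softmaxV ((EuclideanSpace.equiv (Fin k) ℝ) v))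

noncomputable def smDE {k : ℕ} (x : EuclideanSpace ℝ (Fin k)) :
    EuclideanSpace ℝ (Fin k) →L[ℝ] EuclideanSpace ℝ (Fin k) :=
  (((EuclideanSpace.equiv (Fin k) ℝ).symm :
      (Fin k → ℝ) →L[ℝ] EuclideanSpace ℝ (Fin k))).comp
    ((LinearMap.toContinuousLinearMap
        (smJlin (softmaxV ((EuclideanSpace.equiv (Fin k) ℝ) x)))).comp
      ((EuclideanSpace.equiv (Fin k) ℝ : EuclideanSpace ℝ (Fin k) →L[ℝ] (Fin k → ℝ))))

lemma smE_hasFDerivAt {k : ℕ} (hk : 0 < k) (x : EuclideanSpace ℝ (Fin k)) :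
    HasFDerivAt smE (smDE x) x := by
  have h1 := (softmax_hasFDerivAt_pi hk ((EuclideanSpace.equiv (Fin k) ℝ) x)).comp x
    ((EuclideanSpace.equiv (Fin k) ℝ).hasFDerivAt)
  have h2 := ((EuclideanSpace.equiv (Fin k) ℝ).symm.hasFDerivAt).comp x h1
  exact h2

lemma smDE_norm_le {k : ℕ} (hk : 0 < k) (x : EuclideanSpace ℝ (Fin k)) :
    ‖smDE x‖ ≤ 1 := by
  apply ContinuousLinearMap.opNorm_le_bound _ zero_le_one
  intro w
  rw [one_mul]
  set s := softmaxV ((EuclideanSpace.equiv (Fin k) ℝ) x) with hs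
  have happ : ∀ j, (smDE x w) j = s j * (w j - ∑ l, s l * w l) := fun j => rfl
  rw [EuclideanSpace.norm_eq, EuclideanSpace.norm_eq]
  apply Real.sqrt_le_sqrt
  calc ∑ j, ‖(smDE x w) j‖ ^ 2
      = ∑ j, (s j * (w j - ∑ l, s l * w l)) ^ 2 := by
        exact Finset.sum_congr rfl fun j _ => by rw [happ j, Real.norm_eq_abs, sq_abs]
    _ ≤ ∑ j, w j ^ 2 := smJ_bound s w (softmaxV_nonneg hk _) (softmaxV_le_one hk _)
        (softmaxV_sum_one hk _)
    _ = ∑ j, ‖w j‖ ^ 2 := Finset.sum_congr rfl fun j _ => by rw [Real.norm_eq_abs, sq_abs]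

lemma softmax_lipschitz_s7 {k : ℕ} (hk : 0 < k) (a b : Fin k → ℝ) :
    euclNorm (fun j => softmaxV a j - softmaxV b j) ≤ euclNorm (fun j => a j - b j) := by
  have key := Convex.norm_image_sub_le_of_norm_hasFDerivWithin_le
    (f := smE (k := k)) (f' := fun v => smDE v) (C := 1) (s := Set.univ)
    (fun v _ => (smE_hasFDerivAt hk v).hasFDerivWithinAt)
    (fun v _ => smDE_norm_le hk v) convex_univ (Set.mem_univ ((WithLp.equiv 2 (Fin k → ℝ)).symm b))
    (Set.mem_univ ((WithLp.equiv 2 (Fin k → ℝ)).symm a))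
  rw [one_mul] at key
  have e1 : (WithLp.equiv 2 (Fin k → ℝ)).symm (fun j => softmaxV a j - softmaxV b j)
      = smE ((WithLp.equiv 2 (Fin k → ℝ)).symm a) - smE ((WithLp.equiv 2 (Fin k → ℝ)).symm b) := rfl
  have e2 : (WithLp.equiv 2 (Fin k → ℝ)).symm (fun j => a j - b j)
      = (WithLp.equiv 2 (Fin k → ℝ)).symm a - (WithLp.equiv 2 (Fin k → ℝ)).symm b := rfl
  rw [euclNorm_eq_norm_s7, euclNorm_eq_norm_s7, e1, e2]
  exact key

lemma euclNorm_add_le {k : ℕ} (f g : Fin k → ℝ) :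
    euclNorm (fun j => f j + g j) ≤ euclNorm f + euclNorm g := by
  rw [euclNorm_eq_norm_s7, euclNorm_eq_norm_s7, euclNorm_eq_norm_s7]
  have e : (WithLp.equiv 2 (Fin k → ℝ)).symm (fun j => f j + g j)
      = (WithLp.equiv 2 (Fin k → ℝ)).symm f + (WithLp.equiv 2 (Fin k → ℝ)).symm g := rfl
  rw [e]
  exact norm_add_le _ _

lemma euclNorm_div {k : ℕ} (f : Fin k → ℝ) (c : ℝ) (hc : 0 ≤ c) :
    euclNorm (fun j => f j / c) = euclNorm f / c := by
  unfold euclNorm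
  simp_rw [div_pow]
  rw [← Finset.sum_div, Real.sqrt_div (by positivity), Real.sqrt_sq hc]

lemma euclNorm_prob_le_one {k : ℕ} (s : Fin k → ℝ) (h0 : ∀ j, 0 ≤ s j) (h1 : ∀ j, s j ≤ 1)
    (hsum : ∑ j, s j = 1) : euclNorm s ≤ 1 := by
  unfold euclNorm
  rw [show (1:ℝ) = Real.sqrt 1 from Real.sqrt_one.symm]
  apply Real.sqrt_le_sqrt
  calc ∑ j, s j ^ 2 ≤ ∑ j, s j := Finset.sum_le_sum fun j _ => by nlinarith [h0 j, h1 j]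
    _ = 1 := hsum

/-- Theorem 1 of the paper (row form): on the Frobenius ball of radius `p*`, the map
`p ↦ Y(p)_i` is Lipschitz with constant `C₁ p* + C₂`, where
`C₁ = ‖X_i W_Q‖₂ ‖W_K‖_op ‖W_V‖_op / √d` and `C₂ = ‖W_V‖_op`. -/
theorem attnY_row_lipschitz_on_ball {n m d dx dt dv : ℕ}
    (hn : 0 < n) (hm : 0 < m) (hd : 0 < d) (hdx : 0 < dx) (hdt : 0 < dt) (hdv : 0 < dv)
    (X : Matrix (Fin n) (Fin dx) ℝ)
    (WQ : Matrix (Fin dx) (Fin d) ℝ) (WK : Matrix (Fin dt) (Fin d) ℝ)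
    (WV : Matrix (Fin dt) (Fin dv) ℝ)
    (i : Fin n) (pstar : ℝ) (hpstar : 0 ≤ pstar)
    (p p' : Matrix (Fin m) (Fin dt) ℝ)
    (hp : frobNorm p ≤ pstar) (hp' : frobNorm p' ≤ pstar) :
    euclNorm (fun b => attnY X WQ WK WV p i b - attnY X WQ WK WV p' i b)
      ≤ (euclNorm (fun l => (X * WQ) i l) * matOpNorm WK * matOpNorm WV / Real.sqrt d
            * pstar + matOpNorm WV) * frobNorm (p - p') := by
  have hd' : (0:ℝ) < Real.sqrt d := Real.sqrt_pos.2 (by exact_mod_cast hd)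
  set q : Fin d → ℝ := fun l => (X * WQ) i l with hq
  set aP : Fin m → ℝ := fun j => ((X * WQ) * (p * WK)ᵀ) i j / Real.sqrt d with haP
  set aP' : Fin m → ℝ := fun j => ((X * WQ) * (p' * WK)ᵀ) i j / Real.sqrt d with haP'
  set s : Fin m → ℝ := softmaxV aP with hsdef
  set s' : Fin m → ℝ := softmaxV aP' with hs'def
  set F : ℝ := frobNorm (p - p') with hF
  set K : ℝ := matOpNorm WK with hK
  set V : ℝ := matOpNorm WV with hV
  have hK0 : 0 ≤ K := norm_nonneg _
  have hV0 : 0 ≤ V := norm_nonneg _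
  have hF0 : 0 ≤ F := frobNorm_nonneg _
  have hQ0 : 0 ≤ euclNorm q := euclNorm_nonneg _
  -- rows of attnY
  have hY : ∀ b, attnY X WQ WK WV p i b = ∑ j, s j * (p * WV) j b := fun b => by
    rw [attnY, Matrix.mul_apply]; rfl
  have hY' : ∀ b, attnY X WQ WK WV p' i b = ∑ j, s' j * (p' * WV) j b := fun b => by
    rw [attnY, Matrix.mul_apply]; rfl
  -- split into the two terms
  have hsplit : (fun b => attnY X WQ WK WV p i b - attnY X WQ WK WV p' i b)
      = fun b => (∑ j, (s j - s' j) * (p * WV) j b)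
          + ∑ j, s' j * ((p - p') * WV) j b := by
    funext b
    rw [hY b, hY' b, ← Finset.sum_sub_distrib, ← Finset.sum_add_distrib]
    apply Finset.sum_congr rfl
    intro j _
    have hsub : ((p - p') * WV) j b = (p * WV) j b - (p' * WV) j b := by
      rw [Matrix.sub_mul]; rfl
    rw [hsub]; ring
  rw [hsplit]
  -- bound on softmax difference
  have hdiff : (fun j => s j - s' j) = fun j => softmaxV aP j - softmaxV aP' j := rfl
  have hadiff : (fun j => aP j - aP' j)
      = fun j => (∑ l, q l * ((p - p') * WK) j l) / Real.sqrt d := by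
    funext j
    rw [haP, haP']
    simp only
    rw [div_sub_div_same]
    congr 1
    rw [Matrix.mul_apply, Matrix.mul_apply, ← Finset.sum_sub_distrib]
    apply Finset.sum_congr rfl
    intro l _
    rw [Matrix.transpose_apply, Matrix.transpose_apply]
    have hsub : ((p - p') * WK) j l = (p * WK) j l - (p' * WK) j l := by
      rw [Matrix.sub_mul]; rfl
    rw [hsub]; ring
  have h_as : euclNorm (fun j => s j - s' j) ≤ euclNorm q * (F * K) / Real.sqrt d := by
    rw [hdiff]
    calc euclNorm (fun j => softmaxV aP j - softmaxV aP' j)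
        ≤ euclNorm (fun j => aP j - aP' j) := softmax_lipschitz_s7 hm aP aP'
      _ = euclNorm (fun j => ∑ l, q l * ((p - p') * WK) j l) / Real.sqrt d := by
          rw [hadiff, euclNorm_div _ _ hd'.le]
      _ ≤ (euclNorm q * frobNorm ((p - p') * WK)) / Real.sqrt d := by
          apply div_le_div_of_nonneg_right ?_ hd'.le
          exact euclNorm_sum_mul_le q _
      _ ≤ euclNorm q * (F * K) / Real.sqrt d := by
          apply div_le_div_of_nonneg_right ?_ hd'.le
          exact mul_le_mul_of_nonneg_left (frobNorm_mul_le _ _) hQ0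
  -- bound on p * WV
  have h_pv : frobNorm (p * WV) ≤ pstar * V :=
    le_trans (frobNorm_mul_le _ _) (mul_le_mul_of_nonneg_right hp hV0)
  -- term 1
  have hT1 : euclNorm (fun b => ∑ j, (s j - s' j) * (p * WV) j b)
      ≤ (euclNorm q * (F * K) / Real.sqrt d) * (pstar * V) := by
    calc euclNorm (fun b => ∑ j, (s j - s' j) * (p * WV) j b)
        ≤ euclNorm (fun j => s j - s' j) * frobNorm ((p * WV)ᵀ) :=
          euclNorm_sum_mul_le _ _
      _ = euclNorm (fun j => s j - s' j) * frobNorm (p * WV) := by rw [frobNorm_transpose]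
      _ ≤ (euclNorm q * (F * K) / Real.sqrt d) * (pstar * V) := by
          apply mul_le_mul h_as h_pv (frobNorm_nonneg _)
          exact div_nonneg (mul_nonneg hQ0 (mul_nonneg hF0 hK0)) hd'.le
  -- term 2
  have hs'1 : euclNorm s' ≤ 1 := euclNorm_prob_le_one s' (softmaxV_nonneg hm _)
    (softmaxV_le_one hm _) (softmaxV_sum_one hm _)
  have hT2 : euclNorm (fun b => ∑ j, s' j * ((p - p') * WV) j b) ≤ F * V := by
    calc euclNorm (fun b => ∑ j, s' j * ((p - p') * WV) j b)
        ≤ euclNorm s' * frobNorm (((p - p') * WV)ᵀ) := euclNorm_sum_mul_le _ _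
      _ = euclNorm s' * frobNorm ((p - p') * WV) := by rw [frobNorm_transpose]
      _ ≤ 1 * (F * V) := by
          apply mul_le_mul hs'1 (frobNorm_mul_le _ _) (frobNorm_nonneg _) zero_le_one
      _ = F * V := one_mul _
  calc euclNorm (fun b => (∑ j, (s j - s' j) * (p * WV) j b)
          + ∑ j, s' j * ((p - p') * WV) j b)
      ≤ euclNorm (fun b => ∑ j, (s j - s' j) * (p * WV) j b)
        + euclNorm (fun b => ∑ j, s' j * ((p - p') * WV) j b) := euclNorm_add_le _ _
    _ ≤ (euclNorm q * (F * K) / Real.sqrt d) * (pstar * V) + F * V := add_le_add hT1 hT2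
    _ = (euclNorm q * K * V / Real.sqrt d * pstar + V) * F := by ring
end
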